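/- arXiv:1506.08204 — 3 statements merged into one kernel-verified Lean document; each statement's English description precedes it below -/
import Mathlib

section
/- Let A be a symmetric n×n matrix with nonnegative entries, and let d, λ > 0 with λ ≤ d/2 be such that A·1 = d·1 and |xᵀ·A·x| ≤ λ·‖x‖² for every vector x orthogonal to the all-ones vector 1. Then (n/d)·(d·I − A) ≈_ε (n·I − J), where J is the n×n all-ones matrix (so n·I − J is the Laplacian of the complete graph on n vertices) and ε = 2·ln(2)·λ/d. -/
/-!
Both `(n/d)(d·I - A)` and the complete-graph Laplacian `n·I - J` are symmetric and kill the
all-ones vector, so the Loewner comparison only has to be checked on the sum-zero hyperplane.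
There `n·I - J` acts as `n·I`, while the quadratic form of `(n/d)(d·I - A)` is
`n‖y‖² - (n/d)·yᵀAy`, which lies within a factor `1 ± λ/d` of `n‖y‖²`. For `0 ≤ t ≤ 1/2` one has
`1 + t ≤ e^{2 ln 2 · t}` and `e^{-2 ln 2 · t} ≤ 1 - t`, the latter by Bernoulli's inequality.
-/

open Matrix BigOperators Finset
open scoped Classical

noncomputable section

/-- Loewner order: `PSDLE A B` means `A ⪯ B`, i.e. `B - A` is positive semidefinite. -/
def PSDLE {n : Type*} [Fintype n] (A B : Matrix n n ℝ) : Prop :=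
  (B - A).PosSemidef

/-- `ApproxEps A ε B` means `A ≈_ε B`, i.e. `e^ε • B ⪰ A ⪰ e^{-ε} • B`. -/
def ApproxEps {n : Type*} [Fintype n] (A : Matrix n n ℝ) (ε : ℝ) (B : Matrix n n ℝ) : Prop :=
  PSDLE A (Real.exp ε • B) ∧ PSDLE (Real.exp (-ε) • B) A

/-- `M` is α-strongly diagonally dominant:
`M_{ii} ≥ (1+α)·Σ_{j≠i} |M_{ij}|` for every `i`. -/
def IsStronglyDD {n : Type*} [Fintype n] [DecidableEq n] (α : ℝ) (M : Matrix n n ℝ) : Prop :=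
  ∀ i, (1 + α) * ∑ j ∈ Finset.univ.erase i, |M i j| ≤ M i i

/-- A Laplacian matrix: symmetric, nonpositive off-diagonal entries, zero row sums. -/
def IsLaplacian {n : Type*} [Fintype n] (L : Matrix n n ℝ) : Prop :=
  L.IsSymm ∧ (∀ i j, i ≠ j → L i j ≤ 0) ∧ ∀ i, ∑ j, L i j = 0

/-- An SDDM matrix: symmetric positive definite, nonpositive off-diagonal entries,
and each diagonal entry at least the sum of absolute values of the off-diagonal
entries in its row. -/
def IsSDDM {n : Type*} [Fintype n] [DecidableEq n] (M : Matrix n n ℝ) : Prop :=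
  M.IsSymm ∧ M.PosDef ∧ (∀ i j, i ≠ j → M i j ≤ 0) ∧
    ∀ i, ∑ j ∈ Finset.univ.erase i, |M i j| ≤ M i i

section

variable {ι : Type*} [Fintype ι]

lemma Matrix.dotProduct_mulVec_add_smul_of_mulVec_eq_zero {P : Matrix ι ι ℝ} (hP : P.IsSymm)
    {v : ι → ℝ} (hv : P *ᵥ v = 0) (y : ι → ℝ) (c : ℝ) :
    (y + c • v) ⬝ᵥ P *ᵥ (y + c • v) = y ⬝ᵥ P *ᵥ y := by
  have hvP : v ᵥ* P = 0 := by rw [← mulVec_transpose, hP.eq, hv]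
  rw [mulVec_add, mulVec_smul, hv, smul_zero, add_zero, add_dotProduct, smul_dotProduct,
    dotProduct_mulVec v, hvP, zero_dotProduct, smul_zero, add_zero]

lemma Matrix.posSemidef_of_mulVec_one_eq_zero {P : Matrix ι ι ℝ} (hP : P.IsSymm)
    (h1 : P *ᵥ (fun _ => (1 : ℝ)) = 0)
    (hq : ∀ y : ι → ℝ, ∑ i, y i = 0 → 0 ≤ y ⬝ᵥ P *ᵥ y) : P.PosSemidef := by
  refine PosSemidef.of_dotProduct_mulVec_nonneg (isHermitian_iff_isSymm.mpr hP) fun x => ?_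
  rw [star_trivial]
  rcases isEmpty_or_nonempty ι with hι | hι
  · simp [dotProduct]
  set c : ℝ := (∑ i, x i) / Fintype.card ι
  set y : ι → ℝ := x - c • fun _ => 1
  have hy : ∑ i, y i = 0 := by
    have hcard : (Fintype.card ι : ℝ) ≠ 0 := Nat.cast_ne_zero.mpr Fintype.card_ne_zero
    simp [y, c, Finset.sum_sub_distrib, mul_div_cancel₀ _ hcard]
  have hx : x = y + c • fun _ => 1 := by simp [y]
  rw [hx, dotProduct_mulVec_add_smul_of_mulVec_eq_zero hP h1]
  exact hq y hy

lemma approxEps_of_dotProduct_mulVec_bounds {L K : Matrix ι ι ℝ} {ε : ℝ}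
    (hL : L.IsSymm) (hK : K.IsSymm) (hL1 : L *ᵥ (fun _ => (1 : ℝ)) = 0)
    (hK1 : K *ᵥ (fun _ => (1 : ℝ)) = 0)
    (hbounds : ∀ y : ι → ℝ, ∑ i, y i = 0 →
      Real.exp (-ε) * (y ⬝ᵥ K *ᵥ y) ≤ y ⬝ᵥ L *ᵥ y ∧
        y ⬝ᵥ L *ᵥ y ≤ Real.exp ε * (y ⬝ᵥ K *ᵥ y)) :
    ApproxEps L ε K := by
  have hK1' : ∀ c : ℝ, (c • K) *ᵥ (fun _ => (1 : ℝ)) = 0 := fun c => by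
    rw [smul_mulVec, hK1, smul_zero]
  refine ⟨posSemidef_of_mulVec_one_eq_zero ((hK.smul _).sub hL) ?_ fun y hy => ?_,
    posSemidef_of_mulVec_one_eq_zero (hL.sub (hK.smul _)) ?_ fun y hy => ?_⟩
  · rw [sub_mulVec, hK1', hL1, sub_zero]
  · rw [sub_mulVec, dotProduct_sub, smul_mulVec, dotProduct_smul, smul_eq_mul, sub_nonneg]
    exact (hbounds y hy).2
  · rw [sub_mulVec, hK1', hL1, sub_zero]
  · rw [sub_mulVec, dotProduct_sub, smul_mulVec, dotProduct_smul, smul_eq_mul, sub_nonneg]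
    exact (hbounds y hy).1

section DecidableEq

variable [DecidableEq ι]

lemma Matrix.isSymm_card_smul_one_sub_allOnes :
    ((Fintype.card ι : ℝ) • (1 : Matrix ι ι ℝ) - of fun _ _ => (1 : ℝ)).IsSymm :=
  (isSymm_one.smul _).sub (IsSymm.ext fun _ _ => rfl)

lemma Matrix.card_smul_one_sub_allOnes_mulVec (y : ι → ℝ) :
    ((Fintype.card ι : ℝ) • (1 : Matrix ι ι ℝ) - of fun _ _ => (1 : ℝ)) *ᵥ y
      = (Fintype.card ι : ℝ) • y - fun _ => ∑ j, y j := by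
  rw [sub_mulVec, smul_mulVec, one_mulVec]
  ext i
  simp [mulVec, dotProduct]

lemma Matrix.abs_dotProduct_mulVec_smul_sub_sub_le {A : Matrix ι ι ℝ} {c d lam : ℝ}
    (hc : 0 ≤ c) (hd : 0 < d) {y : ι → ℝ} (hy : |y ⬝ᵥ A *ᵥ y| ≤ lam * (y ⬝ᵥ y)) :
    |y ⬝ᵥ ((c / d) • (d • (1 : Matrix ι ι ℝ) - A)) *ᵥ y - c * (y ⬝ᵥ y)|
      ≤ lam / d * (c * (y ⬝ᵥ y)) := by
  have hquad : y ⬝ᵥ ((c / d) • (d • (1 : Matrix ι ι ℝ) - A)) *ᵥ y - c * (y ⬝ᵥ y)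
      = -(c / d) * (y ⬝ᵥ A *ᵥ y) := by
    simp only [smul_mulVec, sub_mulVec, one_mulVec, dotProduct_smul, dotProduct_sub,
      smul_eq_mul]
    field_simp
    ring
  rw [hquad, abs_mul, abs_neg, abs_of_nonneg (by positivity)]
  calc c / d * |y ⬝ᵥ A *ᵥ y| ≤ c / d * (lam * (y ⬝ᵥ y)) := by gcongr
    _ = lam / d * (c * (y ⬝ᵥ y)) := by ring

end DecidableEq

end

namespace Real

lemma one_add_le_exp_two_log_two_mul {t : ℝ} (ht : 0 ≤ t) :
    1 + t ≤ exp (2 * log 2 * t) := by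
  have h2 : 1 ≤ 2 * log 2 := by linarith [log_two_gt_d9]
  calc 1 + t ≤ 1 + 2 * log 2 * t := by nlinarith
    _ ≤ exp (2 * log 2 * t) := by linarith [add_one_le_exp (2 * log 2 * t)]

-- Bernoulli's inequality `(1/2)^(2t) ≤ 1 - t` for the exponent `2t ∈ [0, 1]`.
lemma exp_neg_two_log_two_mul_le_one_sub {t : ℝ} (ht0 : 0 ≤ t) (ht : t ≤ 1 / 2) :
    exp (-(2 * log 2 * t)) ≤ 1 - t := by
  have hbern : (1 + (-1 / 2 : ℝ)) ^ (2 * t) ≤ 1 + 2 * t * (-1 / 2) :=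
    rpow_one_add_le_one_add_mul_self (by norm_num) (by linarith) (by linarith)
  have hpow : (1 + (-1 / 2 : ℝ)) ^ (2 * t) = exp (-(2 * log 2 * t)) := by
    rw [rpow_def_of_pos (by norm_num), show (1 + (-1 / 2) : ℝ) = 2⁻¹ by norm_num, log_inv]
    ring_nf
  linarith

end Real

theorem expander_approximates_complete_general (n : ℕ) (A : Matrix (Fin n) (Fin n) ℝ) (d lam : ℝ)
    (hsym : A.IsSymm)
    (hd : 0 < d) (hlam : 0 < lam) (hlamd : lam ≤ d / 2)
    (hreg : A *ᵥ (fun _ => (1 : ℝ)) = fun _ => d)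
    (heig : ∀ x : Fin n → ℝ, (∑ i, x i) = 0 → |x ⬝ᵥ A *ᵥ x| ≤ lam * (x ⬝ᵥ x)) :
    ApproxEps (((n : ℝ) / d) • (d • (1 : Matrix (Fin n) (Fin n) ℝ) - A))
      (2 * Real.log 2 * lam / d)
      ((n : ℝ) • (1 : Matrix (Fin n) (Fin n) ℝ) - Matrix.of fun _ _ => (1 : ℝ)) := by
  have ht0 : 0 ≤ lam / d := div_nonneg hlam.le hd.le
  have ht : lam / d ≤ 1 / 2 := by rw [div_le_iff₀ hd]; linarith
  have hK : ∀ y, ((n : ℝ) • (1 : Matrix (Fin n) (Fin n) ℝ) - of fun _ _ => (1 : ℝ)) *ᵥ y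
      = (n : ℝ) • y - fun _ => ∑ j, y j := by
    simpa using card_smul_one_sub_allOnes_mulVec (ι := Fin n)
  refine approxEps_of_dotProduct_mulVec_bounds (((isSymm_one.smul d).sub hsym).smul _)
    (by simpa using isSymm_card_smul_one_sub_allOnes (ι := Fin n)) ?_ ?_ fun y hy => ?_
  · rw [smul_mulVec, sub_mulVec, smul_mulVec, one_mulVec, hreg]
    ext; simp
  · rw [hK]
    ext; simp
  have hKy : y ⬝ᵥ ((n : ℝ) • (1 : Matrix (Fin n) (Fin n) ℝ) - of fun _ _ => (1 : ℝ)) *ᵥ y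
      = n * (y ⬝ᵥ y) := by
    rw [hK, hy]
    simp
  have hnq : 0 ≤ (n : ℝ) * (y ⬝ᵥ y) :=
    mul_nonneg (Nat.cast_nonneg n) (by simpa using dotProduct_star_self_nonneg y)
  obtain ⟨hlow, hupp⟩ := abs_le.mp
    (abs_dotProduct_mulVec_smul_sub_sub_le (Nat.cast_nonneg n) hd (heig y hy))
  rw [hKy, mul_div_assoc]
  constructor
  · nlinarith [Real.exp_neg_two_log_two_mul_le_one_sub ht0 ht]
  · nlinarith [Real.one_add_le_exp_two_log_two_mul ht0]

/-- expanders approximate complete graphs: if `A` is a symmetric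
nonnegative `n×n` matrix with `A·1 = d·1` and `|xᵀAx| ≤ λ‖x‖²` for all `x ⊥ 1`,
with `0 < λ ≤ d/2`, then `(n/d)·(d·I − A) ≈_ε (n·I − J)` where
`ε = 2·ln 2·λ/d`. -/
theorem expander_approximates_complete (n : ℕ) (A : Matrix (Fin n) (Fin n) ℝ) (d lam : ℝ)
    (hsym : A.IsSymm) (hnn : ∀ i j, 0 ≤ A i j)
    (hd : 0 < d) (hlam : 0 < lam) (hlamd : lam ≤ d / 2)
    (hreg : A *ᵥ (fun _ => (1 : ℝ)) = fun _ => d)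
    (heig : ∀ x : Fin n → ℝ, (∑ i, x i) = 0 → |x ⬝ᵥ A *ᵥ x| ≤ lam * (x ⬝ᵥ x)) :
    ApproxEps (((n : ℝ) / d) • (d • (1 : Matrix (Fin n) (Fin n) ℝ) - A))
      (2 * Real.log 2 * lam / d)
      ((n : ℝ) • (1 : Matrix (Fin n) (Fin n) ℝ) - Matrix.of fun _ _ => (1 : ℝ)) :=
  expander_approximates_complete_general n A d lam hsym hd hlam hlamd hreg heig
end
end

section
/- Let V be a finite vertex set and d ∈ ℝ^V with 0 < d_v ≤ 1 for every v. Let H = {v ∈ V : d_v = 1} and L = V \ H, and suppose 1 ≤ |L| ≤ |H|. Let G be the product demand graph of d, let G_{HH} be the subgraph consisting of all edges with both endpoints in H, and let G_{LH} be the subgraph consisting of all edges with one endpoint in L and the other in H. Then L_{G_{HH}} + L_{G_{LH}} ≈_{3|L|/|H|} L_G. -/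
/-!
Write `L_st = ∑_{u ∈ s, v ∈ t} d_u d_v L_{uv}` over ordered pairs, so that `L_G = ½ L_VV`.
Splitting `V = H ∪ L` gives `L_VV = L_HH + 2 L_LH + L_LL`, so with `A = ½ L_HH + L_LH` we have
`L_G = A + ½ L_LL`, and it suffices that `½ L_LL ⪯ ε A`. Route each low–low edge `{l, l'}`
through a high vertex `h`: `L_{ll'} ⪯ 2 (L_{lh} + L_{hl'})`, and `d_l d_{l'} ≤ d_l d_h, d_{l'} d_h`
because `d_h = 1`. Averaging over the `|H|` choices of `h` gives
`½ L_LL ⪯ (2|L|/|H|) L_LH ⪯ ε A`, and adding `0 ⪯ N ⪯ ε A` to `A ⪰ 0` changes it by at most a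
factor `1 + ε ≤ e^ε`.
-/

open Matrix BigOperators Finset
open scoped Classical

noncomputable section

/-- The vector `e_u - e_v`. -/
def eVec {ι : Type*} [DecidableEq ι] (u v : ι) : ι → ℝ :=
  fun a => (if a = u then 1 else 0) - (if a = v then 1 else 0)

/-- The Laplacian of a single unit-weight edge `{u,v}`:
`(e_u - e_v)(e_u - e_v)ᵀ`. -/
def edgeL {ι : Type*} [DecidableEq ι] (u v : ι) : Matrix ι ι ℝ :=
  Matrix.vecMulVec (eVec u v) (eVec u v)

open scoped MatrixOrder

section Loewner

variable {n : Type*} [Fintype n]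

theorem psdle_iff_le {A B : Matrix n n ℝ} : PSDLE A B ↔ A ≤ B := Iff.rfl

theorem approxEps_add_of_le_smul {A N : Matrix n n ℝ} {ε : ℝ} (hε : 0 ≤ ε) (hA : 0 ≤ A)
    (hN : 0 ≤ N) (hNA : N ≤ ε • A) : ApproxEps A ε (A + N) := by
  refine ⟨psdle_iff_le.2 ?_, psdle_iff_le.2 ?_⟩
  · calc A ≤ A + N := le_add_of_nonneg_right hN
      _ ≤ Real.exp ε • (A + N) :=
          le_smul_of_one_le_left (add_nonneg hA hN) (Real.one_le_exp hε)
  · have hAN : A + N ≤ Real.exp ε • A :=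
      calc A + N ≤ A + ε • A := add_le_add_right hNA A
        _ = (ε + 1) • A := by module
        _ ≤ Real.exp ε • A := smul_le_smul_of_nonneg_right (Real.add_one_le_exp ε) hA
    calc Real.exp (-ε) • (A + N) ≤ Real.exp (-ε) • (Real.exp ε • A) :=
          smul_le_smul_of_nonneg_left hAN (Real.exp_pos _).le
      _ = A := by rw [smul_smul, ← Real.exp_add, neg_add_cancel, Real.exp_zero, one_smul]

end Loewner

section EdgeLaplacian

variable {ι : Type*} [DecidableEq ι]

theorem eVec_add_eVec (u v w : ι) : eVec u v + eVec v w = eVec u w := by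
  ext a
  simp only [eVec, Pi.add_apply]
  ring

theorem edgeL_comm (u v : ι) : edgeL v u = edgeL u v := by
  have h : eVec v u = -eVec u v := by
    ext a
    simp only [eVec, Pi.neg_apply]
    ring
  rw [edgeL, edgeL, h, vecMulVec_neg, neg_vecMulVec, neg_neg]

variable [Fintype ι]

theorem edgeL_nonneg (u v : ι) : 0 ≤ edgeL u v :=
  (posSemidef_vecMulVec_self_star (eVec u v)).nonneg

/-- Path inequality: `2(ppᵀ + qqᵀ) - (p + q)(p + q)ᵀ = (p - q)(p - q)ᵀ ⪰ 0`. -/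
theorem edgeL_le_two_smul_add (u v w : ι) :
    edgeL u w ≤ (2 : ℝ) • (edgeL u v + edgeL v w) := by
  have h : (2 : ℝ) • (edgeL u v + edgeL v w) - edgeL u w =
      vecMulVec (eVec u v - eVec v w) (star (eVec u v - eVec v w)) := by
    rw [star_trivial]
    ext i j
    simp only [edgeL, ← eVec_add_eVec u v w, vecMulVec_apply, Matrix.sub_apply,
      Matrix.add_apply, Matrix.smul_apply, Pi.add_apply, Pi.sub_apply, smul_eq_mul]
    ring
  rw [← sub_nonneg, h]
  exact (posSemidef_vecMulVec_self_star _).nonneg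

end EdgeLaplacian

section DemandLaplacian

variable {ι : Type*} [DecidableEq ι]

/-- For `s = t` every edge `{u, v}` is counted twice, as `(u, v)` and as `(v, u)`. -/
def demandLap (d : ι → ℝ) (s t : Finset ι) : Matrix ι ι ℝ :=
  ∑ u ∈ s, ∑ v ∈ t, (d u * d v) • edgeL u v

theorem demandLap_comm (d : ι → ℝ) (s t : Finset ι) : demandLap d t s = demandLap d s t := by
  rw [demandLap, demandLap, sum_comm]
  exact sum_congr rfl fun u _ => sum_congr rfl fun v _ => by rw [mul_comm, edgeL_comm]

theorem demandLap_union_union (d : ι → ℝ) {s t : Finset ι} (h : Disjoint s t) :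
    demandLap d (s ∪ t) (s ∪ t) =
      demandLap d s s + (2 : ℝ) • demandLap d t s + demandLap d t t := by
  have hl : ∀ r, demandLap d (s ∪ t) r = demandLap d s r + demandLap d t r := fun r =>
    sum_union h
  have hr : ∀ r, demandLap d r (s ∪ t) = demandLap d r s + demandLap d r t := fun r => by
    simp only [demandLap, sum_union h, sum_add_distrib]
  rw [hl, hr, hr, demandLap_comm d s t]
  module

variable [Fintype ι]

theorem demandLap_nonneg {d : ι → ℝ} (hd : ∀ v, 0 ≤ d v) (s t : Finset ι) :
    0 ≤ demandLap d s t :=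
  sum_nonneg fun u _ => sum_nonneg fun v _ =>
    smul_nonneg (mul_nonneg (hd u) (hd v)) (edgeL_nonneg u v)

theorem card_smul_demandLap_le {d : ι → ℝ} {L H : Finset ι} (hd : ∀ l ∈ L, 0 ≤ d l)
    (hLH : ∀ l ∈ L, ∀ h ∈ H, d l ≤ d h) :
    (H.card : ℝ) • demandLap d L L ≤ (4 * L.card : ℝ) • demandLap d L H := by
  set f : ι → ι → Matrix ι ι ℝ := fun l h => (2 * (d l * d h)) • edgeL l h
  have triple : ∀ l ∈ L, ∀ l' ∈ L, ∀ h ∈ H,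
      (d l * d l') • edgeL l l' ≤ f l h + f l' h := by
    intro l hl l' hl' h hh
    calc (d l * d l') • edgeL l l'
        ≤ (d l * d l') • ((2 : ℝ) • (edgeL l h + edgeL h l')) :=
          smul_le_smul_of_nonneg_left (edgeL_le_two_smul_add l h l')
            (mul_nonneg (hd l hl) (hd l' hl'))
      _ = (2 * (d l * d l')) • edgeL l h + (2 * (d l' * d l)) • edgeL l' h := by
          rw [edgeL_comm h l']; module
      _ ≤ f l h + f l' h := by
          refine add_le_add (smul_le_smul_of_nonneg_right ?_ (edgeL_nonneg l h))
            (smul_le_smul_of_nonneg_right ?_ (edgeL_nonneg l' h))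
          · exact mul_le_mul_of_nonneg_left
              (mul_le_mul_of_nonneg_left (hLH l' hl' h hh) (hd l hl)) zero_le_two
          · exact mul_le_mul_of_nonneg_left
              (mul_le_mul_of_nonneg_left (hLH l hl h hh) (hd l' hl')) zero_le_two
  calc (H.card : ℝ) • demandLap d L L
        = ∑ l ∈ L, ∑ l' ∈ L, ∑ _h ∈ H, (d l * d l') • edgeL l l' := by
        simp only [demandLap, smul_sum, sum_const, Nat.cast_smul_eq_nsmul]
    _ ≤ ∑ l ∈ L, ∑ l' ∈ L, ∑ h ∈ H, (f l h + f l' h) :=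
        sum_le_sum fun l hl => sum_le_sum fun l' hl' => sum_le_sum fun h hh =>
          triple l hl l' hl' h hh
    _ = (4 * L.card : ℝ) • demandLap d L H := by
        have hf : ∑ l ∈ L, ∑ h ∈ H, f l h = (2 : ℝ) • demandLap d L H := by
          simp only [demandLap, f, smul_sum, smul_smul]
        simp only [sum_add_distrib, sum_const]
        rw [← smul_sum, hf]
        module

theorem half_smul_demandLap_le {d : ι → ℝ} {L H : Finset ι} (hd : ∀ l ∈ L, 0 ≤ d l)
    (hLH : ∀ l ∈ L, ∀ h ∈ H, d l ≤ d h) (hH : H.Nonempty) :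
    (1 / 2 : ℝ) • demandLap d L L ≤ (2 * L.card / H.card : ℝ) • demandLap d L H := by
  have hH : (0 : ℝ) < H.card := by exact_mod_cast hH.card_pos
  calc (1 / 2 : ℝ) • demandLap d L L
      = (1 / (2 * H.card) : ℝ) • ((H.card : ℝ) • demandLap d L L) := by
        rw [smul_smul]
        congr 1
        field_simp
    _ ≤ (1 / (2 * H.card) : ℝ) • ((4 * L.card : ℝ) • demandLap d L H) :=
        smul_le_smul_of_nonneg_left (card_smul_demandLap_le hd hLH) (by positivity)
    _ = (2 * L.card / H.card : ℝ) • demandLap d L H := by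
        rw [smul_smul]
        congr 1
        field_simp
        ring

end DemandLaplacian

/-- low-demand edges are unimportant: for a product demand graph
with demands `0 < d_v ≤ 1`, `H = {v : d_v = 1}`, `L = V \ H`, `1 ≤ |L| ≤ |H|`,
one has `L_{G_HH} + L_{G_LH} ≈_{3|L|/|H|} L_G`. -/
theorem product_demand_drop_LL {V : Type*} [Fintype V] [DecidableEq V] (d : V → ℝ)
    (hd0 : ∀ v, 0 < d v) (hd1 : ∀ v, d v ≤ 1) :
    let H := Finset.univ.filter fun v => d v = 1
    let L := Finset.univ.filter fun v => d v ≠ 1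
    1 ≤ L.card → L.card ≤ H.card →
    ApproxEps
      ((1 / 2 : ℝ) • (∑ u ∈ H, ∑ v ∈ H, (d u * d v) • edgeL u v) +
        ∑ l ∈ L, ∑ h ∈ H, (d l * d h) • edgeL l h)
      (3 * (L.card : ℝ) / (H.card : ℝ))
      ((1 / 2 : ℝ) • ∑ u : V, ∑ v : V, (d u * d v) • edgeL u v) := by
  intro H L hL_pos hL_le
  have hH : H.Nonempty := card_pos.1 (hL_pos.trans hL_le)
  have hLH : ∀ l ∈ L, ∀ h ∈ H, d l ≤ d h := fun l _ h hh => (mem_filter.1 hh).2 ▸ hd1 l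
  have hU : (univ : Finset V) = H ∪ L := (filter_union_filter_not_eq _ _).symm
  have hdisj : Disjoint H L := disjoint_filter_filter_not _ _ _
  -- with the `let` values of `H` and `L` in context, `positivity` and `gcongr` hit max recursion
  clear_value H L
  have hd : ∀ v, 0 ≤ d v := fun v => (hd0 v).le
  have hHH : 0 ≤ (1 / 2 : ℝ) • demandLap d H H :=
    smul_nonneg one_half_pos.le (demandLap_nonneg hd _ _)
  have hLL : 0 ≤ (1 / 2 : ℝ) • demandLap d L L :=
    smul_nonneg one_half_pos.le (demandLap_nonneg hd _ _)
  have hLH0 := demandLap_nonneg hd L H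
  set A := (1 / 2 : ℝ) • demandLap d H H + demandLap d L H
  have hA : 0 ≤ A := add_nonneg hHH hLH0
  have hB : (1 / 2 : ℝ) • demandLap d univ univ = A + (1 / 2 : ℝ) • demandLap d L L := by
    rw [hU, demandLap_union_union d hdisj]
    module
  have hε : 2 * L.card / H.card ≤ 3 * (L.card : ℝ) / H.card := by gcongr; norm_num
  show ApproxEps A _ ((1 / 2 : ℝ) • demandLap d univ univ)
  rw [hB]
  refine approxEps_add_of_le_smul (by positivity) hA hLL ?_
  calc (1 / 2 : ℝ) • demandLap d L L ≤ (2 * L.card / H.card : ℝ) • demandLap d L H :=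
        half_smul_demandLap_le (fun l _ => hd l) hLH hH
    _ ≤ (3 * L.card / H.card : ℝ) • demandLap d L H := smul_le_smul_of_nonneg_right hε hLH0
    _ ≤ (3 * L.card / H.card : ℝ) • A :=
        smul_le_smul_of_nonneg_left (le_add_of_nonneg_left hHH) (by positivity)
end
end

section
/- Let V be a finite vertex set and d ∈ ℝ^V with 0 < d_v ≤ 1 for every v. Let H = {v ∈ V : d_v = 1} and L = V \ H = {l_1,…,l_k} with k ≥ 1, and let V_1,…,V_k be a partition of H with |V_j| ≥ s for every j, where s ≥ 1. Let G_{HH} be the subgraph of the product demand graph of d consisting of all edges with both endpoints in H, and G_{LH} the subgraph of all edges between L and H. Then L_{G_{HH}} + L_{G_{LH}} ≈_{4/√s} L_{G_{HH}} + Σ_{j=1}^{k} (|H|/|V_j|)·Σ_{h∈V_j} d_{l_j}·d_h·L_{(l_j,h)}, where L_{(u,v)} = (e_u − e_v)(e_u − e_v)ᵀ is the Laplacian of the unit-weight edge {u,v}. -/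
open Matrix BigOperators Finset
open scoped Classical

noncomputable section

/-!
Both sides share the clique on `H`, whose quadratic form at `x` is `|H|·C` with
`C = Σ_{h∈H} (x_h - μ)²` and `μ` the mean of `x` on `H`. Expanding around means, the `L`–`H`
edges contribute `|H|·Σ_l d_l (x_l - μ)² + (Σ_l d_l)·C`, while the stars contribute
`|H|·Σ_l d_l (x_l - μ_l)²` plus a weighted within-part variance, `μ_l` being the mean of `x` on
`P l`. As every part has at least `s` vertices and `d_l ≤ 1`, the terms `(Σ_l d_l)·C`, the
within-part variance and `|H|·Σ_l d_l (μ_l - μ)²` are all at most `|H|·C/s`, and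
`(a + b)² ≤ (1 + δ) a² + (1 + δ⁻¹) b²` with `δ = 1/√s` exchanges `x_l - μ` for `x_l - μ_l`.
So either form is at most `1 + 4/√s ≤ exp (4/√s)` times the other.
-/

section QuadraticForm

variable {V : Type*}

lemma isHermitian_sum {ι : Type*} (S : Finset ι) {A : ι → Matrix V V ℝ}
    (hA : ∀ i ∈ S, (A i).IsHermitian) : (∑ i ∈ S, A i).IsHermitian :=
  isSelfAdjoint_sum S hA

variable [Fintype V]

def quadForm (x : V → ℝ) : Matrix V V ℝ →ₗ[ℝ] ℝ where
  toFun M := x ⬝ᵥ M *ᵥ x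
  map_add' A B := by simp [add_mulVec, dotProduct_add]
  map_smul' c A := by simp [smul_mulVec, dotProduct_smul]

lemma approxEps_of_quadForm_le {A B : Matrix V V ℝ} (hA : A.IsHermitian) (hB : B.IsHermitian)
    {ε : ℝ} (hAB : ∀ x, quadForm x A ≤ Real.exp ε * quadForm x B)
    (hBA : ∀ x, quadForm x B ≤ Real.exp ε * quadForm x A) : ApproxEps A ε B := by
  have hquad (x : V → ℝ) (M : Matrix V V ℝ) : star x ⬝ᵥ M *ᵥ x = quadForm x M := rfl
  refine ⟨.of_dotProduct_mulVec_nonneg ((hB.smul (.all _)).sub hA) fun x => ?_,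
    .of_dotProduct_mulVec_nonneg (hA.sub (hB.smul (.all _))) fun x => ?_⟩
  · rw [hquad, map_sub, map_smul, smul_eq_mul, sub_nonneg]
    exact hAB x
  · rw [hquad, map_sub, map_smul, smul_eq_mul, sub_nonneg, Real.exp_neg,
      inv_mul_le_iff₀ (Real.exp_pos ε)]
    exact hBA x

variable [DecidableEq V]

lemma eVec_dotProduct (u v : V) (x : V → ℝ) : eVec u v ⬝ᵥ x = x u - x v := by
  simp [eVec, dotProduct, sub_mul, Finset.sum_sub_distrib]

lemma quadForm_edgeL (x : V → ℝ) (u v : V) : quadForm x (edgeL u v) = (x u - x v) ^ 2 := by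
  change x ⬝ᵥ _ *ᵥ x = _
  rw [edgeL, dotProduct_mulVec, vecMul_vecMulVec, smul_dotProduct, dotProduct_comm x,
    eVec_dotProduct, smul_eq_mul, sq]

lemma isHermitian_edgeL (u v : V) : (edgeL u v).IsHermitian := by
  simpa [edgeL] using (posSemidef_vecMulVec_self_star (eVec u v)).isHermitian

end QuadraticForm

section Variance

variable {ι : Type*} (T : Finset ι) (x : ι → ℝ)

lemma sum_sq_sub_eq_card_mul_sq_add (a : ℝ) :
    ∑ i ∈ T, (a - x i) ^ 2 = #T * (a - 𝔼 i ∈ T, x i) ^ 2 + ∑ i ∈ T, (x i - 𝔼 j ∈ T, x j) ^ 2 := by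
  set μ := 𝔼 i ∈ T, x i
  have hcentered : ∑ i ∈ T, (μ - x i) = 0 := by
    rw [Finset.sum_sub_distrib, Finset.sum_const, nsmul_eq_mul, card_mul_expect, sub_self]
  calc ∑ i ∈ T, (a - x i) ^ 2
      = ∑ i ∈ T, ((a - μ) ^ 2 + 2 * (a - μ) * (μ - x i) + (x i - μ) ^ 2) :=
        Finset.sum_congr rfl fun i _ => by ring
    _ = #T * (a - μ) ^ 2 + ∑ i ∈ T, (x i - μ) ^ 2 := by
        rw [Finset.sum_add_distrib, Finset.sum_add_distrib, ← Finset.mul_sum, hcentered,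
          Finset.sum_const, nsmul_eq_mul, mul_zero, add_zero]

lemma card_mul_sq_expect_sub_le (a : ℝ) :
    #T * (𝔼 i ∈ T, x i - a) ^ 2 ≤ ∑ i ∈ T, (x i - a) ^ 2 := by
  have := sum_sq_sub_eq_card_mul_sq_add T x a
  simp only [sub_sq_comm a] at this
  rw [this, le_add_iff_nonneg_right]
  exact Finset.sum_nonneg fun i _ => sq_nonneg _

lemma sum_sq_sub_expect_le (a : ℝ) :
    ∑ i ∈ T, (x i - 𝔼 j ∈ T, x j) ^ 2 ≤ ∑ i ∈ T, (x i - a) ^ 2 := by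
  have := sum_sq_sub_eq_card_mul_sq_add T x a
  simp only [sub_sq_comm a] at this
  rw [this, le_add_iff_nonneg_left]
  positivity

lemma sum_sum_sq_sub_eq :
    ∑ i ∈ T, ∑ j ∈ T, (x i - x j) ^ 2 = 2 * #T * ∑ i ∈ T, (x i - 𝔼 j ∈ T, x j) ^ 2 := by
  simp only [sum_sq_sub_eq_card_mul_sq_add, Finset.sum_add_distrib, ← Finset.mul_sum,
    Finset.sum_const, nsmul_eq_mul]
  ring

end Variance

lemma add_sq_le_one_add_mul {δ : ℝ} (hδ : 0 < δ) (a b : ℝ) :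
    (a + b) ^ 2 ≤ (1 + δ) * a ^ 2 + (1 + δ⁻¹) * b ^ 2 := by
  have key : (1 + δ) * a ^ 2 + (1 + δ⁻¹) * b ^ 2 - (a + b) ^ 2 = (δ * a - b) ^ 2 / δ := by
    field_simp
    ring
  have : 0 ≤ (δ * a - b) ^ 2 / δ := by positivity
  linarith

lemma sum_mul_sub_sq_le {ι : Type*} (S : Finset ι) {w : ι → ℝ} (hw : ∀ i ∈ S, 0 ≤ w i) {δ : ℝ}
    (hδ : 0 < δ) (a b c : ι → ℝ) :
    ∑ i ∈ S, w i * (a i - c i) ^ 2 ≤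
      (1 + δ) * ∑ i ∈ S, w i * (a i - b i) ^ 2 + (1 + δ⁻¹) * ∑ i ∈ S, w i * (b i - c i) ^ 2 := by
  rw [Finset.mul_sum, Finset.mul_sum, ← Finset.sum_add_distrib]
  refine Finset.sum_le_sum fun i hi => ?_
  have := mul_le_mul_of_nonneg_left (add_sq_le_one_add_mul hδ (a i - b i) (b i - c i)) (hw i hi)
  rw [sub_add_sub_cancel] at this
  linarith

lemma add_add_le_exp_mul {m C T₁ T₂ E Z W u : ℝ} (hu : 0 < u) (hu1 : u ≤ 1) (hm : 0 ≤ m)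
    (hC : 0 ≤ C) (hT₂ : 0 ≤ T₂) (hW : 0 ≤ W) (hT : T₁ ≤ (1 + u) * T₂ + (1 + u⁻¹) * E)
    (hE : E ≤ u ^ 2 * C) (hZ : Z ≤ u ^ 2 * (m * C)) :
    m * C + (m * T₁ + Z) ≤ Real.exp (4 * u) * (m * C + (m * T₂ + W)) := by
  have hEC : (1 + u⁻¹) * E ≤ (u ^ 2 + u) * C := by
    calc (1 + u⁻¹) * E ≤ (1 + u⁻¹) * (u ^ 2 * C) := by gcongr
      _ = (u ^ 2 + u) * C := by field_simp
  have hmT : m * T₁ ≤ (1 + u) * (m * T₂) + (u ^ 2 + u) * (m * C) := by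
    calc m * T₁ ≤ m * ((1 + u) * T₂ + (u ^ 2 + u) * C) :=
          mul_le_mul_of_nonneg_left (hT.trans (by linarith)) hm
      _ = (1 + u) * (m * T₂) + (u ^ 2 + u) * (m * C) := by ring
  have hu2 : u ^ 2 ≤ u := by nlinarith
  calc m * C + (m * T₁ + Z) ≤ (1 + 4 * u) * (m * C + m * T₂) := by
        nlinarith [mul_nonneg hm hC, mul_nonneg hm hT₂,
          mul_le_mul_of_nonneg_right hu2 (mul_nonneg hm hC)]
    _ ≤ (1 + 4 * u) * (m * C + (m * T₂ + W)) :=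
        mul_le_mul_of_nonneg_left (by linarith) (by positivity)
    _ ≤ Real.exp (4 * u) * (m * C + (m * T₂ + W)) :=
        mul_le_mul_of_nonneg_right (by linarith [Real.add_one_le_exp (4 * u)]) (by positivity)

section Partition

variable {V : Type*} [DecidableEq V] {d : V → ℝ} (x : V → ℝ) {L H : Finset V} {P : V → Finset V}
  {s : ℝ}

lemma sum_mul_le_sum_div_of_partition (hdisj : (L : Set V).PairwiseDisjoint P)
    (hcover : L.biUnion P = H) (hs : 0 < s) (hcard : ∀ l ∈ L, s ≤ #(P l))
    (hd1 : ∀ l ∈ L, d l ≤ 1) {F g : V → ℝ} (hF0 : ∀ l ∈ L, 0 ≤ F l)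
    (hF : ∀ l ∈ L, #(P l) * F l ≤ ∑ h ∈ P l, g h) :
    ∑ l ∈ L, d l * F l ≤ (∑ h ∈ H, g h) / s := by
  rw [← hcover, Finset.sum_biUnion hdisj, Finset.sum_div]
  refine Finset.sum_le_sum fun l hl => ?_
  rw [le_div_iff₀ hs]
  calc d l * F l * s ≤ F l * #(P l) :=
        mul_le_mul (mul_le_of_le_one_left (hF0 l hl) (hd1 l hl)) (hcard l hl) hs.le (hF0 l hl)
    _ ≤ ∑ h ∈ P l, g h := by linarith [hF l hl]

lemma sum_le_card_div_of_partition (hdisj : (L : Set V).PairwiseDisjoint P)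
    (hcover : L.biUnion P = H) (hs : 0 < s) (hcard : ∀ l ∈ L, s ≤ #(P l))
    (hd1 : ∀ l ∈ L, d l ≤ 1) :
    ∑ l ∈ L, d l ≤ #H / s := by
  simpa using sum_mul_le_sum_div_of_partition hdisj hcover hs hcard hd1 (F := 1) (g := 1)
    (fun _ _ => zero_le_one) (fun l _ => by simp)

lemma sum_mul_sq_expect_sub_le (hdisj : (L : Set V).PairwiseDisjoint P)
    (hcover : L.biUnion P = H) (hs : 0 < s) (hcard : ∀ l ∈ L, s ≤ #(P l))
    (hd1 : ∀ l ∈ L, d l ≤ 1) (a : ℝ) :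
    ∑ l ∈ L, d l * (𝔼 h ∈ P l, x h - a) ^ 2 ≤ (∑ h ∈ H, (x h - a) ^ 2) / s :=
  sum_mul_le_sum_div_of_partition hdisj hcover hs hcard hd1 (fun _ _ => sq_nonneg _)
    fun l _ => card_mul_sq_expect_sub_le (P l) x a

lemma sum_mul_sum_sq_sub_expect_le (hdisj : (L : Set V).PairwiseDisjoint P)
    (hcover : L.biUnion P = H) (hs : 0 < s) (hcard : ∀ l ∈ L, s ≤ #(P l))
    (hd1 : ∀ l ∈ L, d l ≤ 1) {c : ℝ} (hc : 0 ≤ c) (a : ℝ) :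
    ∑ l ∈ L, d l * (c / #(P l) * ∑ h ∈ P l, (x h - 𝔼 j ∈ P l, x j) ^ 2) ≤
      c * (∑ h ∈ H, (x h - a) ^ 2) / s := by
  rw [Finset.mul_sum]
  refine sum_mul_le_sum_div_of_partition hdisj hcover hs hcard hd1
    (fun l _ => by positivity) fun l hl => ?_
  have hP : (#(P l) : ℝ) ≠ 0 := (hs.trans_le (hcard l hl)).ne'
  rw [← mul_assoc, mul_div_cancel₀ _ hP, ← Finset.mul_sum]
  exact mul_le_mul_of_nonneg_left (sum_sq_sub_expect_le (P l) x a) hc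

end Partition

section ProductDemand

variable {V : Type*} [Fintype V] [DecidableEq V] (d : V → ℝ)

def cliqueLap (H : Finset V) : Matrix V V ℝ :=
  (1 / 2 : ℝ) • ∑ u ∈ H, ∑ v ∈ H, (d u * d v) • edgeL u v

def bicliqueLap (L H : Finset V) : Matrix V V ℝ :=
  ∑ l ∈ L, ∑ h ∈ H, (d l * d h) • edgeL l h

def starsLap (L : Finset V) (P : V → Finset V) (c : ℝ) : Matrix V V ℝ :=
  ∑ l ∈ L, (c / #(P l)) • ∑ h ∈ P l, (d l * d h) • edgeL l h

lemma isHermitian_cliqueLap (H : Finset V) : (cliqueLap d H).IsHermitian :=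
  (isHermitian_sum _ fun u _ => isHermitian_sum _ fun v _ =>
    (isHermitian_edgeL u v).smul (.all _)).smul (.all _)

lemma isHermitian_bicliqueLap (L H : Finset V) : (bicliqueLap d L H).IsHermitian :=
  isHermitian_sum _ fun l _ => isHermitian_sum _ fun h _ => (isHermitian_edgeL l h).smul (.all _)

lemma isHermitian_starsLap (L : Finset V) (P : V → Finset V) (c : ℝ) :
    (starsLap d L P c).IsHermitian :=
  isHermitian_sum _ fun l _ =>
    (isHermitian_sum _ fun h _ => (isHermitian_edgeL l h).smul (.all _)).smul (.all _)

variable {d} (x : V → ℝ)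

lemma quadForm_star (l : V) {T : Finset V} (hT : ∀ h ∈ T, d h = 1) :
    quadForm x (∑ h ∈ T, (d l * d h) • edgeL l h) =
      d l * (#T * (x l - 𝔼 h ∈ T, x h) ^ 2 + ∑ h ∈ T, (x h - 𝔼 j ∈ T, x j) ^ 2) := by
  rw [map_sum, ← sum_sq_sub_eq_card_mul_sq_add, Finset.mul_sum]
  refine Finset.sum_congr rfl fun h hh => ?_
  rw [map_smul, quadForm_edgeL, hT h hh, mul_one, smul_eq_mul]

lemma quadForm_cliqueLap {H : Finset V} (hH : ∀ h ∈ H, d h = 1) :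
    quadForm x (cliqueLap d H) = #H * ∑ h ∈ H, (x h - 𝔼 j ∈ H, x j) ^ 2 := by
  simp only [cliqueLap, map_smul, map_sum, quadForm_edgeL, smul_eq_mul]
  rw [Finset.sum_congr rfl fun u hu => Finset.sum_congr rfl fun v hv => by
    rw [hH u hu, hH v hv, one_mul, one_mul], sum_sum_sq_sub_eq]
  ring

lemma quadForm_bicliqueLap {L H : Finset V} (hH : ∀ h ∈ H, d h = 1) :
    quadForm x (bicliqueLap d L H) = #H * ∑ l ∈ L, d l * (x l - 𝔼 h ∈ H, x h) ^ 2 +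
      (∑ l ∈ L, d l) * ∑ h ∈ H, (x h - 𝔼 j ∈ H, x j) ^ 2 := by
  rw [bicliqueLap, map_sum, Finset.mul_sum, Finset.sum_mul, ← Finset.sum_add_distrib]
  exact Finset.sum_congr rfl fun l _ => by rw [quadForm_star x l hH]; ring

lemma quadForm_starsLap {L : Finset V} {P : V → Finset V} (hP : ∀ l ∈ L, (P l).Nonempty)
    (hPd : ∀ l ∈ L, ∀ h ∈ P l, d h = 1) (c : ℝ) :
    quadForm x (starsLap d L P c) = c * ∑ l ∈ L, d l * (x l - 𝔼 h ∈ P l, x h) ^ 2 +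
      ∑ l ∈ L, d l * (c / #(P l) * ∑ h ∈ P l, (x h - 𝔼 j ∈ P l, x j) ^ 2) := by
  rw [starsLap, map_sum, Finset.mul_sum, ← Finset.sum_add_distrib]
  refine Finset.sum_congr rfl fun l hl => ?_
  have hcard : (#(P l) : ℝ) ≠ 0 := by exact_mod_cast (hP l hl).card_ne_zero
  rw [map_smul, quadForm_star x l (hPd l hl), smul_eq_mul]
  field_simp

variable {L H : Finset V} {P : V → Finset V} {s : ℝ}

lemma quadForm_le_exp_mul_quadForm (hd0 : ∀ l ∈ L, 0 ≤ d l) (hd1 : ∀ l ∈ L, d l ≤ 1)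
    (hdH : ∀ h ∈ H, d h = 1) (hdisj : (L : Set V).PairwiseDisjoint P)
    (hcover : L.biUnion P = H) (hs : 1 ≤ s) (hcard : ∀ l ∈ L, s ≤ #(P l)) :
    quadForm x (cliqueLap d H + bicliqueLap d L H) ≤
        Real.exp (4 / √s) * quadForm x (cliqueLap d H + starsLap d L P #H) ∧
      quadForm x (cliqueLap d H + starsLap d L P #H) ≤
        Real.exp (4 / √s) * quadForm x (cliqueLap d H + bicliqueLap d L H) := by
  have hs0 : 0 < s := by linarith
  set u := (√s)⁻¹
  have hu0 : 0 < u := by positivity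
  have hu1 : u ≤ 1 := inv_le_one_of_one_le₀ (Real.one_le_sqrt.mpr hs)
  have hdiv (a : ℝ) : a / s = u ^ 2 * a := by
    rw [inv_pow, Real.sq_sqrt hs0.le, inv_mul_eq_div]
  have hP (l) (hl : l ∈ L) : (P l).Nonempty :=
    Finset.card_pos.mp (by exact_mod_cast hs0.trans_le (hcard l hl))
  have hPd (l) (hl : l ∈ L) (h) (hh : h ∈ P l) : d h = 1 :=
    hdH h (hcover ▸ Finset.mem_biUnion.mpr ⟨l, hl, hh⟩)
  rw [div_eq_mul_inv, map_add, map_add, quadForm_cliqueLap x hdH, quadForm_bicliqueLap x hdH,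
    quadForm_starsLap x hP hPd]
  set μ := 𝔼 h ∈ H, x h
  have hC : 0 ≤ ∑ h ∈ H, (x h - μ) ^ 2 := Finset.sum_nonneg fun _ _ => sq_nonneg _
  have hSD :=
    mul_le_mul_of_nonneg_right (sum_le_card_div_of_partition hdisj hcover hs0 hcard hd1) hC
  have hW := sum_mul_sum_sq_sub_expect_le x hdisj hcover hs0 hcard hd1 (Nat.cast_nonneg #H) μ
  have hE := sum_mul_sq_expect_sub_le x hdisj hcover hs0 hcard hd1 μ
  have hE' : ∑ l ∈ L, d l * (μ - 𝔼 h ∈ P l, x h) ^ 2 ≤ (∑ h ∈ H, (x h - μ) ^ 2) / s := by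
    simpa only [sub_sq_comm μ] using hE
  rw [hdiv] at hE hE' hW hSD
  have hT₁₂ := sum_mul_sub_sq_le L hd0 hu0 x (fun l => 𝔼 h ∈ P l, x h) fun _ => μ
  have hT₂₁ := sum_mul_sub_sq_le L hd0 hu0 x (fun _ => μ) fun l => 𝔼 h ∈ P l, x h
  have hT0 (y : V → ℝ) : 0 ≤ ∑ l ∈ L, d l * (x l - y l) ^ 2 :=
    Finset.sum_nonneg fun l hl => mul_nonneg (hd0 l hl) (sq_nonneg _)
  have hW0 : 0 ≤ ∑ l ∈ L, d l * ((#H : ℝ) / #(P l) * ∑ h ∈ P l, (x h - 𝔼 j ∈ P l, x j) ^ 2) :=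
    Finset.sum_nonneg fun l hl => mul_nonneg (hd0 l hl) (by positivity)
  have hSD0 : 0 ≤ (∑ l ∈ L, d l) * ∑ h ∈ H, (x h - μ) ^ 2 :=
    mul_nonneg (Finset.sum_nonneg hd0) hC
  exact ⟨add_add_le_exp_mul hu0 hu1 (Nat.cast_nonneg _) hC (hT0 _) hW0 hT₁₂ hE (by linarith),
    add_add_le_exp_mul hu0 hu1 (Nat.cast_nonneg _) hC (hT0 _) hSD0 hT₂₁ hE' (by linarith)⟩

end ProductDemand

/-- replacing the `L`–`H` edges by stars: for a product demand
graph with demands `0 < d_v ≤ 1`, `H = {v : d_v = 1}`, `L = V \ H` nonempty, and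
a partition `(P l)_{l ∈ L}` of `H` into parts of size at least `s ≥ 1`,
`L_{G_HH} + L_{G_LH} ≈_{4/√s}
  L_{G_HH} + Σ_{l∈L} (|H|/|P l|)·Σ_{h∈P l} d_l·d_h·L_(l,h)`. -/
theorem replace_LH_by_stars {V : Type*} [Fintype V] [DecidableEq V] (d : V → ℝ)
    (hd0 : ∀ v, 0 < d v) (hd1 : ∀ v, d v ≤ 1)
    (P : V → Finset V) (s : ℝ) (hs : 1 ≤ s) :
    let H := Finset.univ.filter fun v => d v = 1
    let L := Finset.univ.filter fun v => d v ≠ 1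
    1 ≤ L.card →
    (∀ l ∈ L, P l ⊆ H) →
    (∀ l ∈ L, ∀ l' ∈ L, l ≠ l' → Disjoint (P l) (P l')) →
    L.biUnion P = H →
    (∀ l ∈ L, s ≤ ((P l).card : ℝ)) →
    ApproxEps
      ((1 / 2 : ℝ) • (∑ u ∈ H, ∑ v ∈ H, (d u * d v) • edgeL u v) +
        ∑ l ∈ L, ∑ h ∈ H, (d l * d h) • edgeL l h)
      (4 / Real.sqrt s)
      ((1 / 2 : ℝ) • (∑ u ∈ H, ∑ v ∈ H, (d u * d v) • edgeL u v) +
        ∑ l ∈ L, ((H.card : ℝ) / ((P l).card : ℝ)) • ∑ h ∈ P l, (d l * d h) • edgeL l h) := by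
  intro H L _ _ hdisj hcover hcard
  have hdH : ∀ h ∈ H, d h = 1 := fun h hh => (Finset.mem_filter.mp hh).2
  have hbound (x : V → ℝ) :=
    quadForm_le_exp_mul_quadForm x (fun l _ => (hd0 l).le) (fun l _ => hd1 l) hdH
      (fun l hl l' hl' => hdisj l hl l' hl') hcover hs hcard
  exact approxEps_of_quadForm_le
    ((isHermitian_cliqueLap d H).add (isHermitian_bicliqueLap d L H))
    ((isHermitian_cliqueLap d H).add (isHermitian_starsLap d L P _))
    (fun x => (hbound x).1) (fun x => (hbound x).2)
end
end
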